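/- Let T be a tree on n vertices with exactly s cut vertices, where 1 ≤ s ≤ n−2. Then for every 1 ≤ l ≤ n−s−1, ε(T) ≤ ε(T(l, n−l−s, s)). -/

import Mathlib

open SimpleGraph

/-- The eccentricity of a vertex: maximum distance to any vertex. -/
noncomputable def ecc {V : Type*} (G : SimpleGraph V) (v : V) : ℕ :=
  ⨆ u, G.dist v u

/-- The total eccentricity index: sum of eccentricities of all vertices. -/
noncomputable def totalEcc {V : Type*} [Fintype V] (G : SimpleGraph V) : ℕ :=
  ∑ v, ecc G v

/-- A pendant vertex: a vertex of degree one, i.e. with exactly one neighbour. -/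
def IsPendant {V : Type*} (G : SimpleGraph V) (v : V) : Prop :=
  ∃! u, G.Adj v u

/-- A cut vertex: a vertex whose removal disconnects the graph. -/
def IsCutVertex {V : Type*} (G : SimpleGraph V) (w : V) : Prop :=
  ¬ (G.induce {v | v ≠ w}).Connected

/-- distance between two subgraphs -/
noncomputable def subgraphDist {V : Type*} (G : SimpleGraph V) (B B' : G.Subgraph) : ℕ :=
  sInf {d | ∃ u ∈ B.verts, ∃ w ∈ B'.verts, G.dist u w = d}

/-- A 2-connected subgraph: at least two vertices, connected, and no cut vertex. -/
def TwoConn {V : Type*} {G : SimpleGraph V} (H : G.Subgraph) : Prop :=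
  2 ≤ H.verts.ncard ∧ H.coe.Connected ∧ ∀ w, ¬ IsCutVertex H.coe w

/-- A block: a maximal 2-connected subgraph. -/
def IsBlock {V : Type*} {G : SimpleGraph V} (H : G.Subgraph) : Prop :=
  TwoConn H ∧ ∀ H' : G.Subgraph, H ≤ H' → TwoConn H' → H' = H

/-- A pendant block: a block containing exactly one cut vertex of `G`. -/
def IsPendantBlock {V : Type*} (G : SimpleGraph V) (H : G.Subgraph) : Prop :=
  ∃! w, w ∈ H.verts ∧ IsCutVertex G w

/-- `G_{k,l}`: the graph obtained from `G` by attaching two new paths,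
with `k` resp. `l` new vertices, at the vertex `v`. -/
def attachTwoPaths {V : Type*} (G : SimpleGraph V) (v : V) (k l : ℕ) :
    SimpleGraph (V ⊕ (Fin k ⊕ Fin l)) :=
  SimpleGraph.fromRel (fun p q =>
    match p, q with
    | .inl x, .inl y => G.Adj x y
    | .inl x, .inr (.inl i) => x = v ∧ i.val = 0
    | .inl x, .inr (.inr i) => x = v ∧ i.val = 0
    | .inr (.inl i), .inr (.inl j) => i.val + 1 = j.val
    | .inr (.inr i), .inr (.inr j) => i.val + 1 = j.val
    | _, _ => False)

/-- The graph obtained from `H1`, `H2` and the path `P_d = v_1 v_2 … v_d` by identifying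
`u ∈ V(H1)`, `v ∈ V(H2)` and `v_1` into a single vertex.  The `Fin (d-1)` part records the
path vertices `v_2, …, v_d`. -/
def glueMid {V1 V2 : Type*} (H1 : SimpleGraph V1) (H2 : SimpleGraph V2)
    (u : V1) (v : V2) (d : ℕ) :
    SimpleGraph (V1 ⊕ ({x : V2 // x ≠ v} ⊕ Fin (d - 1))) :=
  SimpleGraph.fromRel (fun p q =>
    match p, q with
    | .inl x, .inl y => H1.Adj x y
    | .inl x, .inr (.inl y) => x = u ∧ H2.Adj v y.1
    | .inl x, .inr (.inr i) => x = u ∧ i.val = 0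
    | .inr (.inl x), .inr (.inl y) => H2.Adj x.1 y.1
    | .inr (.inr i), .inr (.inr j) => i.val + 1 = j.val
    | _, _ => False)

/-- The graph obtained from `H1`, `H2` and the path `P_d = v_1 v_2 … v_d` by identifying
`u ∈ V(H1)` with `v_1` and `v ∈ V(H2)` with `v_d`.  The `Fin (d-1)` part records the path
vertices `v_2, …, v_d` (the last one being identified with `v`). -/
def glueEnds {V1 V2 : Type*} (H1 : SimpleGraph V1) (H2 : SimpleGraph V2)
    (u : V1) (v : V2) (d : ℕ) :
    SimpleGraph (V1 ⊕ ({x : V2 // x ≠ v} ⊕ Fin (d - 1))) :=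
  SimpleGraph.fromRel (fun p q =>
    match p, q with
    | .inl x, .inl y => H1.Adj x y
    | .inl x, .inr (.inr i) => x = u ∧ i.val = 0
    | .inr (.inl x), .inr (.inl y) => H2.Adj x.1 y.1
    | .inr (.inr i), .inr (.inl y) => i.val + 1 = d - 1 ∧ H2.Adj v y.1
    | .inr (.inr i), .inr (.inr j) => i.val + 1 = j.val
    | _, _ => False)

/-- `U_{n,g}^l`: the unicyclic graph on `n` vertices obtained by joining one end vertex of
the path `P_{n-g}` to a vertex of the cycle `C_g` by an edge. -/
def UnlGraph (n g : ℕ) : SimpleGraph (Fin (n - g) ⊕ Fin g) :=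
  SimpleGraph.fromRel (fun p q =>
    match p, q with
    | .inl i, .inl j => i.val + 1 = j.val
    | .inl i, .inr j => i.val + 1 = n - g ∧ j.val = 0
    | .inr i, .inr j => i.val + 1 = j.val ∨ (i.val = 0 ∧ j.val + 1 = g)
    | _, _ => False)

/-- `U_{n,g}^p`: the unicyclic graph on `n` vertices obtained by attaching `n - g` pendant
vertices to one vertex of the cycle `C_g`. -/
def UnpGraph (n g : ℕ) : SimpleGraph (Fin g ⊕ Fin (n - g)) :=
  SimpleGraph.fromRel (fun p q =>
    match p, q with
    | .inl i, .inl j => i.val + 1 = j.val ∨ (i.val = 0 ∧ j.val + 1 = g)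
    | .inl i, .inr _ => i.val = 0
    | _, _ => False)

/-- The graph obtained by joining the vertex `u` of `H` to the pendant vertex of
`U_{r,g}^l` by an edge. -/
def joinPendant {V : Type*} (H : SimpleGraph V) (u : V) (r g : ℕ) :
    SimpleGraph (V ⊕ (Fin (r - g) ⊕ Fin g)) :=
  SimpleGraph.fromRel (fun p q =>
    match p, q with
    | .inl x, .inl y => H.Adj x y
    | .inl x, .inr (.inl i) => x = u ∧ i.val = 0
    | .inr a, .inr b => (UnlGraph r g).Adj a b
    | _, _ => False)

/-- `C_{m1,m2}^n` in the case `n = m1 + m2 - 1`: two cycles `C_{m1}` and `C_{m2}`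
sharing exactly one vertex (the vertex `0`). -/
def twoCyclesGlued (m1 m2 : ℕ) : SimpleGraph (Fin (m1 + m2 - 1)) :=
  SimpleGraph.fromRel (fun i j =>
    (i.val + 1 = j.val ∧ j.val < m1) ∨ (i.val = 0 ∧ j.val + 1 = m1)
    ∨ (i.val = 0 ∧ j.val = m1) ∨ (m1 ≤ i.val ∧ i.val + 1 = j.val)
    ∨ (i.val = 0 ∧ j.val + 2 = m1 + m2))

/-- `C_{3,3}^n` for `n > 5`: two triangles `{0,1,2}` and `{n-3,n-2,n-1}` joined by the path
`2, 3, …, n-3` (a path on `n - 4` vertices whose ends are identified with a vertex of each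
triangle). -/
def C33 (n : ℕ) : SimpleGraph (Fin n) :=
  SimpleGraph.fromRel (fun i j =>
    (i.val = 0 ∧ j.val = 1) ∨ (i.val = 0 ∧ j.val = 2) ∨ (i.val = 1 ∧ j.val = 2)
    ∨ (2 ≤ i.val ∧ i.val + 1 = j.val ∧ j.val + 3 ≤ n)
    ∨ (i.val + 3 = n ∧ j.val + 2 = n) ∨ (i.val + 2 = n ∧ j.val + 1 = n)
    ∨ (i.val + 3 = n ∧ j.val + 1 = n))

/-- `T(l, m, d)`: the tree obtained from the path `P_d` by attaching `l` pendant vertices at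
one end and `m` pendant vertices at the other end. -/
def Tlmd (l m d : ℕ) : SimpleGraph (Fin d ⊕ (Fin l ⊕ Fin m)) :=
  SimpleGraph.fromRel (fun p q =>
    match p, q with
    | .inl i, .inl j => i.val + 1 = j.val
    | .inl i, .inr (.inl _) => i.val = 0
    | .inl i, .inr (.inr _) => i.val + 1 = d
    | _, _ => False)

/-- `K_m^n(l_1, …, l_m)`: the graph obtained from the complete graph `K_m` by identifying,
for each `i`, one end vertex of a path on `l i` vertices with the `i`-th vertex of `K_m`.
The vertex `⟨i, 0⟩` is the `i`-th vertex of the complete graph. -/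
def Kmn (m : ℕ) (l : Fin m → ℕ) : SimpleGraph ((i : Fin m) × Fin (l i)) :=
  SimpleGraph.fromRel (fun p q =>
    (p.1 = q.1 ∧ p.2.val + 1 = q.2.val) ∨ (p.1 ≠ q.1 ∧ p.2.val = 0 ∧ q.2.val = 0))

/-- The graph obtained from `H`, `C_{m1}` and `C_{m2}` by identifying the vertex `w` of `H`,
a vertex of `C_{m1}` and a vertex of `C_{m2}` into one vertex. -/
def glueTwoCycles {V : Type*} (H : SimpleGraph V) (w : V) (m1 m2 : ℕ) :
    SimpleGraph (V ⊕ (Fin (m1 - 1) ⊕ Fin (m2 - 1))) :=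
  SimpleGraph.fromRel (fun p q =>
    match p, q with
    | .inl x, .inl y => H.Adj x y
    | .inl x, .inr (.inl i) => x = w ∧ (i.val = 0 ∨ i.val + 2 = m1)
    | .inl x, .inr (.inr i) => x = w ∧ (i.val = 0 ∨ i.val + 2 = m2)
    | .inr (.inl i), .inr (.inl j) => i.val + 1 = j.val
    | .inr (.inr i), .inr (.inr j) => i.val + 1 = j.val
    | _, _ => False)

/-- The graph obtained from `H` and the cycle `C_M` by identifying the vertex `w` of `H`
with one vertex of the cycle. -/
def glueOneCycle {V : Type*} (H : SimpleGraph V) (w : V) (M : ℕ) :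
    SimpleGraph (V ⊕ Fin (M - 1)) :=
  SimpleGraph.fromRel (fun p q =>
    match p, q with
    | .inl x, .inl y => H.Adj x y
    | .inl x, .inr i => x = w ∧ (i.val = 0 ∨ i.val + 2 = M)
    | .inr i, .inr j => i.val + 1 = j.val
    | _, _ => False)

/-!
Every inner vertex of a geodesic of a tree is a cut vertex, so all distances, and hence all
eccentricities, are at most `s + 1`. Let `a = p₀, …, p_D = b` be a diametral path, so
`D ≤ s + 1`. Every vertex `u` lies beyond `p_j` as seen from `a` or from `b`, and
`d(u, a), d(u, b) ≤ D`; hence `e(p_j) ≤ max j (D - j)`, while the other `s + 1 - D` cut vertices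
have eccentricity at most `D`. Summing gives at most
`(n - s)(s + 1) + ∑_{0 < j < s + 1} max j (s + 1 - j)`, which is what the pendant and path
vertices of `T(l, n - l - s, s)` contribute at least.
-/

open Finset

/-- In the path `0 - 1 - ⋯ - d` the vertex `j` has eccentricity `max j (d - j)`. -/
def innerPathEccSum (d : ℕ) : ℕ := ∑ j ∈ Ico 1 d, max j (d - j)

lemma innerPathEccSum_add_le_succ (d : ℕ) :
    innerPathEccSum d + d ≤ innerPathEccSum (d + 1) := by
  rcases Nat.eq_zero_or_pos d with rfl | hd
  · simp [innerPathEccSum]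
  rw [innerPathEccSum, innerPathEccSum, sum_Ico_succ_top hd]
  gcongr with j hj
  · omega
  · exact le_max_left _ _

lemma innerPathEccSum_add_mul_le (d k : ℕ) :
    innerPathEccSum d + k * d ≤ innerPathEccSum (d + k) := by
  induction k with
  | zero => simp
  | succ k ih =>
    have := innerPathEccSum_add_le_succ (d + k)
    rw [← add_assoc, Nat.succ_mul]
    omega

namespace SimpleGraph

variable {V : Type*} {G : SimpleGraph V} {u v x : V}

namespace Walk

lemma dist_add_dist_of_mem_support {p : G.Walk u v} (hp : p.length = G.dist u v)
    (hx : x ∈ p.support) : G.dist u x + G.dist x v = G.dist u v := by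
  classical
  have hsplit := (p.take_spec hx).symm
  rw [← length_eq_dist_of_subwalk hp (isSubwalk_of_append_left hsplit),
    ← length_eq_dist_of_subwalk hp (isSubwalk_of_append_right hsplit), ← length_append,
    ← hsplit, hp]

lemma dist_getVert_of_length_eq_dist {p : G.Walk u v} (hp : p.length = G.dist u v) {i : ℕ}
    (hi : i ≤ p.length) : G.dist u (p.getVert i) = i := by
  rw [← length_eq_dist_of_subwalk hp (p.isSubwalk_take i), take_length]
  omega

lemma dist_getVert_right_of_length_eq_dist {p : G.Walk u v} (hp : p.length = G.dist u v)
    {i : ℕ} (hi : i ≤ p.length) : G.dist (p.getVert i) v = p.length - i := by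
  have := dist_add_dist_of_mem_support hp (p.getVert_mem_support i)
  rw [dist_getVert_of_length_eq_dist hp hi] at this
  omega

lemma injOn_getVert_Ico {p : G.Walk u v} (hp : p.length = G.dist u v) :
    Set.InjOn p.getVert (Ico 1 p.length) :=
  (p.isPath_of_length_eq_dist hp).getVert_injOn.mono fun _ hj ↦ (mem_Ico.1 hj).2.le

lemma card_image_getVert_Ico [DecidableEq V] {p : G.Walk u v} (hp : p.length = G.dist u v) :
    #((Ico 1 p.length).image p.getVert) = p.length - 1 := by
  rw [card_image_of_injOn (injOn_getVert_Ico hp), Nat.card_Ico]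

end Walk

lemma ecc_le_of_forall_dist_le {k : ℕ} (h : ∀ u, G.dist v u ≤ k) : ecc G v ≤ k :=
  ciSup_le' h

lemma dist_le_ecc [Finite V] (v u : V) : G.dist v u ≤ ecc G v :=
  le_ciSup (Set.finite_range _).bddAbove u

lemma Reachable.le_add_dist {f : V → ℕ} (hf : ∀ x y, G.Adj x y → f x ≤ f y + 1)
    (h : G.Reachable u v) : f u ≤ f v + G.dist u v := by
  obtain ⟨w, hw⟩ := h.exists_walk_length_eq_dist
  rw [← hw]
  clear hw h
  induction w with
  | nil => simp
  | cons hadj p ih =>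
    have := hf _ _ hadj
    rw [Walk.length_cons]
    omega

namespace IsTree

lemma mem_support_of_dist_add_dist_eq (hT : G.IsTree) {a b : V}
    (hx : G.dist a x + G.dist x b = G.dist a b) (w : G.Walk a b) : x ∈ w.support := by
  classical
  obtain ⟨p, -, hp⟩ := hT.connected.exists_path_of_dist a x
  obtain ⟨q, -, hq⟩ := hT.connected.exists_path_of_dist x b
  have hpq : (p.append q).IsPath :=
    (p.append q).isPath_of_length_eq_dist (by rw [Walk.length_append, hp, hq, hx])
  have heq : w.bypass = p.append q :=
    congrArg Subtype.val <|
    (hT.isAcyclic.subsingleton_path a b).elim ⟨_, w.bypass_isPath⟩ ⟨_, hpq⟩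
  apply w.support_bypass_subset_support
  rw [heq, Walk.mem_support_append_iff]
  exact Or.inl p.end_mem_support

lemma isCutVertex_of_dist_add_dist_eq (hT : G.IsTree) {a b : V}
    (hx : G.dist a x + G.dist x b = G.dist a b) (hxa : x ≠ a) (hxb : x ≠ b) :
    IsCutVertex G x := by
  intro hconn
  obtain ⟨w⟩ := hconn.preconnected ⟨a, hxa.symm⟩ ⟨b, hxb.symm⟩
  have hmem := hT.mem_support_of_dist_add_dist_eq hx (w.map (Embedding.induce _).toHom)
  obtain ⟨y, -, hy⟩ := List.mem_map.1 (Walk.support_map _ _ ▸ hmem)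
  exact y.2 hy

lemma dist_add_dist_eq_or (hT : G.IsTree) {a b : V}
    (hx : G.dist a x + G.dist x b = G.dist a b) (u : V) :
    G.dist a x + G.dist x u = G.dist a u ∨ G.dist u x + G.dist x b = G.dist u b := by
  obtain ⟨p, -, hp⟩ := hT.connected.exists_path_of_dist a u
  obtain ⟨q, -, hq⟩ := hT.connected.exists_path_of_dist u b
  have hmem := hT.mem_support_of_dist_add_dist_eq hx (p.append q)
  rw [Walk.mem_support_append_iff] at hmem
  exact hmem.imp (Walk.dist_add_dist_of_mem_support hp) (Walk.dist_add_dist_of_mem_support hq)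

lemma ecc_le_of_dist_add_dist_eq (hT : G.IsTree) {a b : V}
    (hab : ∀ y z, G.dist y z ≤ G.dist a b) (hx : G.dist a x + G.dist x b = G.dist a b) :
    ecc G x ≤ max (G.dist a x) (G.dist x b) := by
  refine ecc_le_of_forall_dist_le fun u ↦ ?_
  have := hab a u
  have := hab u b
  have : G.dist x u = G.dist u x := dist_comm
  rcases hT.dist_add_dist_eq_or hx u with h | h <;> omega

lemma isCutVertex_getVert (hT : G.IsTree) {a b : V} {p : G.Walk a b}
    (hp : p.length = G.dist a b) {j : ℕ} (hj0 : 0 < j) (hjp : j < p.length) :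
    IsCutVertex G (p.getVert j) := by
  have hdist := Walk.dist_getVert_of_length_eq_dist hp hjp.le
  refine hT.isCutVertex_of_dist_add_dist_eq
    (Walk.dist_add_dist_of_mem_support hp (p.getVert_mem_support j)) ?_ ?_
  · intro hj
    rw [hj, dist_self] at hdist
    omega
  · intro hj
    rw [hj, ← hp] at hdist
    omega

variable {C : Finset V}

lemma image_getVert_Ico_subset [DecidableEq V] (hT : G.IsTree)
    (hC : ∀ x, IsCutVertex G x → x ∈ C) {a b : V} {p : G.Walk a b}
    (hp : p.length = G.dist a b) :
    (Ico 1 p.length).image p.getVert ⊆ C := by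
  intro x hx
  obtain ⟨j, hj, rfl⟩ := mem_image.1 hx
  rw [mem_Ico] at hj
  exact hC _ (hT.isCutVertex_getVert hp hj.1 hj.2)

lemma dist_le_card_add_one (hT : G.IsTree) (hC : ∀ x, IsCutVertex G x → x ∈ C) (u v : V) :
    G.dist u v ≤ #C + 1 := by
  classical
  obtain ⟨p, -, hp⟩ := hT.connected.exists_path_of_dist u v
  have := card_le_card (hT.image_getVert_Ico_subset hC hp)
  rw [Walk.card_image_getVert_Ico hp] at this
  omega

lemma sum_ecc_getVert_le (hT : G.IsTree) {a b : V} (hab : ∀ y z, G.dist y z ≤ G.dist a b)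
    {p : G.Walk a b} (hp : p.length = G.dist a b) :
    ∑ j ∈ Ico 1 p.length, ecc G (p.getVert j) ≤ innerPathEccSum p.length := by
  refine sum_le_sum fun j hj ↦ ?_
  have hj := (mem_Ico.1 hj).2.le
  have hsplit := Walk.dist_add_dist_of_mem_support hp (p.getVert_mem_support j)
  calc ecc G (p.getVert j) ≤ max (G.dist a (p.getVert j)) (G.dist (p.getVert j) b) :=
        hT.ecc_le_of_dist_add_dist_eq hab hsplit
    _ = max j (p.length - j) := by
        rw [Walk.dist_getVert_of_length_eq_dist hp hj,
          Walk.dist_getVert_right_of_length_eq_dist hp hj]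

lemma sum_ecc_le [Finite V] (hT : G.IsTree) (hC : ∀ x, IsCutVertex G x → x ∈ C) :
    ∑ x ∈ C, ecc G x ≤ innerPathEccSum (#C + 1) := by
  classical
  rcases isEmpty_or_nonempty V with hV | hV
  · simp [C.eq_empty_of_isEmpty]
  obtain ⟨⟨a, b⟩, hab⟩ := Finite.exists_max fun q : V × V ↦ G.dist q.1 q.2
  replace hab : ∀ y z, G.dist y z ≤ G.dist a b := fun y z ↦ hab (y, z)
  obtain ⟨p, -, hp⟩ := hT.connected.exists_path_of_dist a b
  set D := p.length
  set I := (Ico 1 D).image p.getVert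
  have hIC : I ⊆ C := hT.image_getVert_Ico_subset hC hp
  have hD : D ≤ #C + 1 := hp ▸ hT.dist_le_card_add_one hC a b
  have hInner : ∑ x ∈ I, ecc G x ≤ innerPathEccSum D := by
    rw [sum_image (Walk.injOn_getVert_Ico hp)]
    exact hT.sum_ecc_getVert_le hab hp
  have hOuter : ∑ x ∈ C \ I, ecc G x ≤ (#C + 1 - D) * D := by
    have hcard : #(C \ I) ≤ #C + 1 - D := by
      rw [card_sdiff_of_subset hIC, Walk.card_image_getVert_Ico hp]
      omega
    calc ∑ x ∈ C \ I, ecc G x ≤ #(C \ I) * D :=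
          sum_le_card_nsmul _ _ _ fun x _ ↦ ecc_le_of_forall_dist_le fun u ↦ hp ▸ hab x u
      _ ≤ (#C + 1 - D) * D := Nat.mul_le_mul_right _ hcard
  calc ∑ x ∈ C, ecc G x = ∑ x ∈ C \ I, ecc G x + ∑ x ∈ I, ecc G x :=
        (sum_sdiff hIC).symm
    _ ≤ innerPathEccSum D + (#C + 1 - D) * D := by omega
    _ ≤ innerPathEccSum (D + (#C + 1 - D)) := innerPathEccSum_add_mul_le _ _
    _ = innerPathEccSum (#C + 1) := by rw [Nat.add_sub_cancel' hD]

lemma totalEcc_le [Fintype V] (hT : G.IsTree)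
    (hC : ∀ x, IsCutVertex G x → x ∈ C) :
    totalEcc G ≤ (Fintype.card V - #C) * (#C + 1) + innerPathEccSum (#C + 1) := by
  classical
  have hOuter : ∑ x ∈ univ \ C, ecc G x ≤ (Fintype.card V - #C) * (#C + 1) := by
    calc ∑ x ∈ univ \ C, ecc G x ≤ #(univ \ C) * (#C + 1) :=
          sum_le_card_nsmul _ _ _ fun x _ ↦
            ecc_le_of_forall_dist_le (hT.dist_le_card_add_one hC x)
      _ = (Fintype.card V - #C) * (#C + 1) := by
          rw [card_sdiff_of_subset (subset_univ C), card_univ]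
  rw [totalEcc, ← sum_sdiff (subset_univ C)]
  exact add_le_add hOuter (hT.sum_ecc_le hC)

end IsTree

end SimpleGraph

section Tlmd

variable {l m d : ℕ}

lemma tlmd_preconnected (hd : 0 < d) : (Tlmd l m d).Preconnected := by
  have hpath : ∀ i (hi : i < d),
      (Tlmd l m d).Reachable (.inl ⟨i, hi⟩) (.inl ⟨0, hd⟩) := by
    intro i
    induction i with
    | zero => exact fun _ ↦ .rfl
    | succ i ih =>
      intro hi
      have hadj : (Tlmd l m d).Adj (.inl ⟨i + 1, hi⟩) (.inl ⟨i, by omega⟩) := by simp [Tlmd]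
      exact hadj.reachable.trans (ih _)
  have hbase : ∀ x, (Tlmd l m d).Reachable x (.inl ⟨0, hd⟩) := by
    rintro (⟨i, hi⟩ | a | b)
    · exact hpath i hi
    · exact Adj.reachable (by simp [Tlmd])
    · have hadj : (Tlmd l m d).Adj (.inr (.inr b)) (.inl ⟨d - 1, by omega⟩) := by
        simp [Tlmd]
        omega
      exact hadj.reachable.trans (hpath _ _)
  exact fun x y ↦ (hbase x).trans (hbase y).symm

lemma innerPathEccSum_add_le_totalEcc_tlmd (hl : 0 < l) (hm : 0 < m) (hd : 0 < d) :
    (l + m) * (d + 1) + innerPathEccSum (d + 1) ≤ totalEcc (Tlmd l m d) := by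
  -- the position along the path, from the left pendants (`0`) to the right pendants (`d + 1`)
  let pos : Fin d ⊕ (Fin l ⊕ Fin m) → ℕ :=
    Sum.elim (fun i ↦ i + 1) (Sum.elim (fun _ ↦ 0) fun _ ↦ d + 1)
  have hpos : ∀ x y, pos x ≤ pos y + (Tlmd l m d).dist x y := fun x y ↦
    (tlmd_preconnected hd x y).le_add_dist <| by
      rintro (i | a | b) (j | c | e) h <;> simp [Tlmd, Fin.ext_iff] at h <;> simp [pos] <;> omega
  have hcomm : ∀ x y, (Tlmd l m d).dist x y = (Tlmd l m d).dist y x := fun _ _ ↦ dist_comm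
  have hPath : ∀ i : Fin d, max ((i : ℕ) + 1) (d - i) ≤ ecc (Tlmd l m d) (.inl i) := by
    intro i
    have h₁ := hpos (.inl i) (.inr (.inl ⟨0, hl⟩))
    have h₂ := hpos (.inr (.inr ⟨0, hm⟩)) (.inl i)
    rw [hcomm] at h₂
    have := dist_le_ecc (G := Tlmd l m d) (.inl i) (.inr (.inl ⟨0, hl⟩))
    have := dist_le_ecc (G := Tlmd l m d) (.inl i) (.inr (.inr ⟨0, hm⟩))
    simp only [pos, Sum.elim_inl, Sum.elim_inr] at h₁ h₂
    omega
  have hLeft : ∀ a : Fin l, d + 1 ≤ ecc (Tlmd l m d) (.inr (.inl a)) := fun a ↦ by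
    have := hpos (.inr (.inr ⟨0, hm⟩)) (.inr (.inl a))
    rw [hcomm] at this
    exact this.trans (by simpa [pos] using dist_le_ecc _ _)
  have hRight : ∀ b : Fin m, d + 1 ≤ ecc (Tlmd l m d) (.inr (.inr b)) := fun b ↦ by
    have := hpos (.inr (.inr b)) (.inr (.inl ⟨0, hl⟩))
    exact this.trans (by simpa [pos] using dist_le_ecc _ _)
  have hSum : innerPathEccSum (d + 1) = ∑ i : Fin d, max ((i : ℕ) + 1) (d - i) := by
    rw [innerPathEccSum, sum_Ico_eq_sum_range,
      Fin.sum_univ_eq_sum_range (fun i ↦ max (i + 1) (d - i))]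
    exact sum_congr rfl fun i _ ↦ by congr 1 <;> omega
  rw [totalEcc, Fintype.sum_sum_type, Fintype.sum_sum_type, hSum, add_mul, add_comm]
  refine add_le_add (sum_le_sum fun i _ ↦ hPath i) (add_le_add ?_ ?_)
  · simpa using card_nsmul_le_sum univ _ _ fun a _ ↦ hLeft a
  · simpa using card_nsmul_le_sum univ _ _ fun b _ ↦ hRight b

end Tlmd

theorem stmt11_general {V : Type*} [Fintype V] (G : SimpleGraph V) (hT : G.IsTree)
    (n s : ℕ) (hcard : Fintype.card V = n) (hs1 : 1 ≤ s)
    (hcut : {w | IsCutVertex G w}.ncard = s) :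
    ∀ l, 1 ≤ l → l ≤ n - s - 1 → totalEcc G ≤ totalEcc (Tlmd l (n - l - s) s) := by
  classical
  intro l hl1 hl2
  set C := univ.filter (IsCutVertex G)
  have hC : #C = s := by simp [C, ← hcut, ← Set.ncard_coe_finset]
  calc totalEcc G ≤ (n - s) * (s + 1) + innerPathEccSum (s + 1) := by
        simpa [hC, hcard] using hT.totalEcc_le (C := C) fun x hx ↦ by simpa [C] using hx
    _ = (l + (n - l - s)) * (s + 1) + innerPathEccSum (s + 1) := by congr 2; omega
    _ ≤ totalEcc (Tlmd l (n - l - s) s) :=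
        innerPathEccSum_add_le_totalEcc_tlmd (by omega) (by omega) (by omega)

theorem stmt11 {V : Type*} [Fintype V] (G : SimpleGraph V) (hT : G.IsTree)
    (n s : ℕ) (hcard : Fintype.card V = n) (hs1 : 1 ≤ s) (hs2 : s ≤ n - 2)
    (hcut : {w | IsCutVertex G w}.ncard = s) :
    ∀ l, 1 ≤ l → l ≤ n - s - 1 → totalEcc G ≤ totalEcc (Tlmd l (n - l - s) s) :=
  stmt11_general G hT n s hcard hs1 hcut
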